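/- arXiv:1912.13041 — 2 statements merged into one kernel-verified Lean document; each statement's English description precedes it below -/
import Mathlib

section
/- Let σ : [0,1] → {-1,1} be a right-continuous step function with exactly n jumps (flips), and let k ≥ 1. Then the Fourier coefficients of σ against e_{2k}(t) = √2 sin(2πkt) and e_{2k+1}(t) = √2 cos(2πkt) satisfy |∫₀¹ e_{2k}(t)σ(t)dt| ≤ √2·n/k and |∫₀¹ e_{2k+1}(t)σ(t)dt| ≤ √2·n/k. -/
open Real Set

/-!
On a piece where `σ` is constant, `∫ f σ` is that constant times `∫ f` over the piece, and for
`f = sin (c ·)` or `cos (c ·)` with `c = 2πk` every such integral is at most `2 / c` in absolute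
value. Because `∫₀¹ f = 0`, the values `σᵢ` may be replaced by `σᵢ - σ₀`: the first piece drops
out and each of the remaining `n` pieces contributes at most `2 · 2 / c`, for a total of
`2n / (πk) ≤ n / k`.
-/

open MeasureTheory intervalIntegral

section AdjacentIntervals

variable {m : ℕ} {a : Fin (m + 1) → ℝ} {g : ℝ → ℝ}

theorem IntervalIntegrable.trans_iterate_fin
    (hg : ∀ i : Fin m, IntervalIntegrable g volume (a i.castSucc) (a i.succ)) :
    IntervalIntegrable g volume (a 0) (a (Fin.last m)) := by
  induction m with
  | zero => exact IntervalIntegrable.refl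
  | succ m ih =>
    exact (ih (a := a ∘ Fin.castSucc) fun i => hg i.castSucc).trans (hg (Fin.last m))

theorem sum_integral_adjacent_intervals_fin
    (hg : ∀ i : Fin m, IntervalIntegrable g volume (a i.castSucc) (a i.succ)) :
    ∑ i : Fin m, ∫ t in a i.castSucc..a i.succ, g t = ∫ t in a 0..a (Fin.last m), g t := by
  induction m with
  | zero => simp
  | succ m ih =>
    have hg' : ∀ i : Fin m,
        IntervalIntegrable g volume (a i.castSucc.castSucc) (a i.succ.castSucc) :=
      fun i => hg i.castSucc
    have hinit := ih (a := a ∘ Fin.castSucc) hg'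
    have hint := IntervalIntegrable.trans_iterate_fin (a := a ∘ Fin.castSucc) hg'
    simp only [Function.comp_apply, Fin.castSucc_zero] at hinit hint
    rw [Fin.sum_univ_castSucc]
    simp only [Fin.succ_castSucc]
    rw [hinit, ← Fin.succ_last]
    exact integral_add_adjacent_intervals hint (hg (Fin.last m))

end AdjacentIntervals

theorem abs_sum_mul_le_of_sum_eq_zero {n : ℕ} {x y : Fin (n + 1) → ℝ} {B M : ℝ}
    (hy : ∑ i, y i = 0) (hxB : ∀ i, |x i| ≤ B) (hyM : ∀ i, |y i| ≤ M) :
    |∑ i, x i * y i| ≤ 2 * B * M * n := by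
  have hshift : ∑ i, x i * y i = ∑ i : Fin n, (x i.succ - x 0) * y i.succ := by
    have : ∑ i, x i * y i = ∑ i, (x i - x 0) * y i := by
      simp only [sub_mul, Finset.sum_sub_distrib, ← Finset.mul_sum, hy, mul_zero, sub_zero]
    rw [this, Fin.sum_univ_succ, sub_self, zero_mul, zero_add]
  have hB : 0 ≤ B := (abs_nonneg _).trans (hxB 0)
  calc |∑ i, x i * y i|
      ≤ ∑ i : Fin n, |x i.succ - x 0| * |y i.succ| := by
        rw [hshift]; exact (Finset.abs_sum_le_sum_abs _ _).trans_eq (by simp only [abs_mul])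
    _ ≤ ∑ _i : Fin n, 2 * B * M := by
        gcongr with i
        · exact (abs_sub _ _).trans (by linarith [hxB i.succ, hxB 0])
        · exact hyM _
    _ = 2 * B * M * n := by simp [mul_comm]

section PiecewiseConstant

variable {f σ : ℝ → ℝ} {p q c : ℝ}

theorem intervalIntegrable_mul_of_eqOn_Ioo (hf : IntervalIntegrable f volume p q) (hpq : p ≤ q)
    (hσ : ∀ t ∈ Ioo p q, σ t = c) : IntervalIntegrable (fun t => f t * σ t) volume p q :=
  (hf.mul_const c).congr_uIoo fun t ht => by rw [hσ t (uIoo_of_le hpq ▸ ht)]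

theorem integral_mul_of_eqOn_Ioo (hpq : p ≤ q) (hσ : ∀ t ∈ Ioo p q, σ t = c) :
    ∫ t in p..q, f t * σ t = (∫ t in p..q, f t) * c := by
  rw [← intervalIntegral.integral_mul_const]
  exact integral_congr_Ioo_of_le hpq fun t ht => by rw [hσ t ht]

variable {n : ℕ} {a : Fin (n + 2) → ℝ} {B M : ℝ}

theorem abs_integral_mul_le_of_eqOn_pieces (hf : Continuous f) (ha : Monotone a)
    (hσ : ∀ i : Fin (n + 1), ∀ t ∈ Ioo (a i.castSucc) (a i.succ), σ t = σ (a i.castSucc))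
    (hσB : ∀ i : Fin (n + 1), |σ (a i.castSucc)| ≤ B)
    (hf₀ : ∫ t in a 0..a (Fin.last (n + 1)), f t = 0)
    (hfM : ∀ i : Fin (n + 1), |∫ t in a i.castSucc..a i.succ, f t| ≤ M) :
    |∫ t in a 0..a (Fin.last (n + 1)), f t * σ t| ≤ 2 * B * M * n := by
  have hle : ∀ i : Fin (n + 1), a i.castSucc ≤ a i.succ := fun i => ha (Fin.castSucc_le_succ i)
  have hpieces : ∫ t in a 0..a (Fin.last (n + 1)), f t * σ t
      = ∑ i : Fin (n + 1), σ (a i.castSucc) * ∫ t in a i.castSucc..a i.succ, f t := by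
    rw [← sum_integral_adjacent_intervals_fin fun i =>
      intervalIntegrable_mul_of_eqOn_Ioo (hf.intervalIntegrable _ _) (hle i) (hσ i)]
    exact Finset.sum_congr rfl fun i _ => by rw [integral_mul_of_eqOn_Ioo (hle i) (hσ i), mul_comm]
  rw [hpieces]
  refine abs_sum_mul_le_of_sum_eq_zero ?_ hσB hfM
  rwa [sum_integral_adjacent_intervals_fin fun _ => hf.intervalIntegrable _ _]

end PiecewiseConstant

section Trigonometric

variable {c : ℝ}

theorem abs_integral_sin_mul_le (hc : 0 < c) (p q : ℝ) :
    |∫ t in p..q, sin (c * t)| ≤ 2 / c := by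
  rw [integral_comp_mul_left (fun t => sin t) hc.ne', integral_sin, smul_eq_mul, abs_mul,
    abs_inv, abs_of_pos hc, inv_mul_eq_div]
  gcongr
  exact abs_sub_le_iff.2 ⟨by linarith [cos_le_one (c * p), neg_one_le_cos (c * q)],
    by linarith [cos_le_one (c * q), neg_one_le_cos (c * p)]⟩

theorem abs_integral_cos_mul_le (hc : 0 < c) (p q : ℝ) :
    |∫ t in p..q, cos (c * t)| ≤ 2 / c := by
  rw [integral_comp_mul_left (fun t => cos t) hc.ne', integral_cos, smul_eq_mul, abs_mul,
    abs_inv, abs_of_pos hc, inv_mul_eq_div]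
  gcongr
  exact abs_sub_le_iff.2 ⟨by linarith [sin_le_one (c * q), neg_one_le_sin (c * p)],
    by linarith [sin_le_one (c * p), neg_one_le_sin (c * q)]⟩

theorem integral_sin_two_pi_nat_mul (k : ℕ) : ∫ t in (0:ℝ)..1, sin (2 * π * k * t) = 0 := by
  rcases Nat.eq_zero_or_pos k with rfl | hk
  · simp
  rw [integral_comp_mul_left (fun t => sin t) (by positivity), integral_sin, mul_zero, mul_one,
    show 2 * π * k = k * (2 * π) by ring, cos_nat_mul_two_pi, cos_zero, sub_self, smul_zero]

theorem integral_cos_two_pi_nat_mul {k : ℕ} (hk : k ≠ 0) :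
    ∫ t in (0:ℝ)..1, cos (2 * π * k * t) = 0 := by
  rw [integral_comp_mul_left (fun t => cos t) (by positivity), integral_cos, mul_zero, mul_one,
    show 2 * π * k = ((2 * k : ℕ) : ℝ) * π by push_cast; ring, sin_nat_mul_pi, sin_zero, sub_self,
    smul_zero]

end Trigonometric

theorem fourier_coefficient_bound_of_step_path_general
    (n : ℕ) (σ : ℝ → ℝ)
    (hval : ∀ t ∈ Set.Ico (0:ℝ) 1, σ t = 1 ∨ σ t = -1)
    (a : Fin (n + 2) → ℝ)
    (ha0 : a 0 = 0) (ha1 : a (Fin.last (n + 1)) = 1) (hmono : StrictMono a)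
    (hconst : ∀ i : Fin (n + 1),
      ∀ t ∈ Set.Ico (a i.castSucc) (a i.succ), σ t = σ (a i.castSucc))
    (k : ℕ) (hk : 1 ≤ k) :
    |∫ t in (0:ℝ)..1, (Real.sqrt 2 * Real.sin (2 * π * k * t)) * σ t|
        ≤ Real.sqrt 2 * n / k ∧
    |∫ t in (0:ℝ)..1, (Real.sqrt 2 * Real.cos (2 * π * k * t)) * σ t|
        ≤ Real.sqrt 2 * n / k := by
  have hc : 0 < 2 * π * k := by positivity
  have hσ : ∀ i : Fin (n + 1), ∀ t ∈ Ioo (a i.castSucc) (a i.succ), σ t = σ (a i.castSucc) :=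
    fun i t ht => hconst i t (Ioo_subset_Ico_self ht)
  have hσ_abs : ∀ i : Fin (n + 1), |σ (a i.castSucc)| ≤ 1 := fun i => by
    have hmem : a i.castSucc ∈ Ico (0:ℝ) 1 :=
      ⟨ha0 ▸ hmono.monotone (Fin.zero_le _), ha1 ▸ hmono (Fin.castSucc_lt_last i)⟩
    rcases hval _ hmem with h | h <;> simp [h]
  have bound : ∀ g : ℝ → ℝ, Continuous g → ∫ t in (0:ℝ)..1, g t = 0 →
      (∀ p q : ℝ, |∫ t in p..q, g t| ≤ 2 / (2 * π * k)) →
      |∫ t in (0:ℝ)..1, (√2 * g t) * σ t| ≤ √2 * n / k := by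
    intro g hg hg₀ hgM
    have hmain := abs_integral_mul_le_of_eqOn_pieces hg hmono.monotone hσ hσ_abs
      (by rwa [ha0, ha1]) (fun _ => hgM _ _)
    rw [ha0, ha1] at hmain
    simp_rw [mul_assoc, intervalIntegral.integral_const_mul, abs_mul,
      abs_of_nonneg (sqrt_nonneg 2), mul_div_assoc]
    gcongr
    calc _ ≤ 2 * 1 * (2 / (2 * π * k)) * n := hmain
      _ = 2 / π * (n / k) := by field_simp
      _ ≤ n / k := mul_le_of_le_one_left (by positivity) ((div_le_one pi_pos).2 two_le_pi)
  exact ⟨bound _ (by fun_prop) (integral_sin_two_pi_nat_mul k) (abs_integral_sin_mul_le hc),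
    bound _ (by fun_prop) (integral_cos_two_pi_nat_mul (by omega)) (abs_integral_cos_mul_le hc)⟩

/-- For a right-continuous `{-1,1}`-valued step function `σ` on `[0,1]`
with exactly `n` jumps, the Fourier coefficients against `√2 sin(2πkt)` and
`√2 cos(2πkt)` are bounded by `√2 n / k`. The step structure is encoded by a
strictly monotone partition `a : Fin (n+2) → ℝ` of `[0,1]` such that `σ` is
constant on each piece `[a i, a (i+1))` and consecutive pieces carry different
values. -/
theorem fourier_coefficient_bound_of_step_path
    (n : ℕ) (σ : ℝ → ℝ)
    (hval : ∀ t ∈ Set.Ico (0:ℝ) 1, σ t = 1 ∨ σ t = -1)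
    (a : Fin (n + 2) → ℝ)
    (ha0 : a 0 = 0) (ha1 : a (Fin.last (n + 1)) = 1) (hmono : StrictMono a)
    (hconst : ∀ i : Fin (n + 1),
      ∀ t ∈ Set.Ico (a i.castSucc) (a i.succ), σ t = σ (a i.castSucc))
    (hjump : ∀ i : Fin n,
      σ (a i.castSucc.castSucc) ≠ σ (a i.succ.castSucc))
    (k : ℕ) (hk : 1 ≤ k) :
    |∫ t in (0:ℝ)..1, (Real.sqrt 2 * Real.sin (2 * π * k * t)) * σ t|
        ≤ Real.sqrt 2 * n / k ∧
    |∫ t in (0:ℝ)..1, (Real.sqrt 2 * Real.cos (2 * π * k * t)) * σ t|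
        ≤ Real.sqrt 2 * n / k :=
  fourier_coefficient_bound_of_step_path_general n σ hval a ha0 ha1 hmono hconst k hk
end

section
/- Let (X_σ)_{σ∈S} be a centered Gaussian process indexed by a finite (or countable) set S with Var(X_σ) ≤ v for all σ. Let μ be a probability measure on S and A ⊂ S with μ(A) > 0. Then E[ log(Σ_{σ∈S} μ(σ)e^{X_σ}) − log(Σ_{σ∈A} μ(σ)e^{X_σ}) ] ≤ log(1 + e^{2v}·μ(Aᶜ)/μ(A)). -/
/-!
By Jensen's inequality for `exp`, `∑_{σ ∈ A} w σ e^{X σ} ≥ w(A) e^Y` with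
`Y = ∑_{σ ∈ A} (w σ / w(A)) X σ`, so the integrand is at most
`log (1 + ∑_{τ ∉ A} (w τ / w(A)) e^{X τ - Y})`. Each `X τ - Y` is a centered Gaussian of variance
at most `4 v`, hence `E e^{X τ - Y} ≤ e^{2 v}`, and Jensen's inequality for the concave `log`
moves the expectation inside the logarithm.
-/

open MeasureTheory ProbabilityTheory Real
open scoped NNReal

section GaussianMoments

variable {Ω : Type*} [MeasurableSpace Ω] {μ : Measure Ω} {Z : Ω → ℝ} {u : ℝ≥0}

lemma integrable_sq_of_map_eq_gaussianReal (hZ : μ.map Z = gaussianReal 0 u) :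
    Integrable (fun ω => Z ω ^ 2) μ :=
  ((hZ ▸ memLp_id_gaussianReal 2).comp_of_map
    (aemeasurable_of_map_neZero (by rw [hZ]; infer_instance))).integrable_sq

lemma integral_sq_of_map_eq_gaussianReal (hZ : μ.map Z = gaussianReal 0 u) :
    ∫ ω, Z ω ^ 2 ∂μ = u := by
  rw [← integral_map (f := fun x => x ^ 2)
    (aemeasurable_of_map_neZero (by rw [hZ]; infer_instance)) (by fun_prop), hZ,
    ← variance_of_integral_eq_zero aemeasurable_id' integral_id_gaussianReal,
    variance_fun_id_gaussianReal]

lemma integrable_exp_of_map_eq_gaussianReal (hZ : μ.map Z = gaussianReal 0 u) :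
    Integrable (fun ω => exp (Z ω)) μ :=
  (hZ ▸ by simpa using integrable_exp_mul_gaussianReal (μ := 0) (v := u) 1 :
    Integrable exp (μ.map Z)).comp_aemeasurable
    (aemeasurable_of_map_neZero (by rw [hZ]; infer_instance))

lemma integral_exp_of_map_eq_gaussianReal (hZ : μ.map Z = gaussianReal 0 u) :
    ∫ ω, exp (Z ω) ∂μ = exp ((∫ ω, Z ω ^ 2 ∂μ) / 2) := by
  simpa [mgf, integral_sq_of_map_eq_gaussianReal hZ] using mgf_gaussianReal hZ 1

end GaussianMoments

lemma integral_sq_sub_sum_le {ι Ω : Type*} [MeasurableSpace Ω] {μ : Measure Ω}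
    {t : Finset ι} {p : ι → ℝ} (hp₀ : ∀ i ∈ t, 0 ≤ p i) (hp₁ : ∑ i ∈ t, p i = 1)
    {Z : Ω → ℝ} {X : ι → Ω → ℝ} {v : ℝ}
    (hZ : Integrable (fun ω => Z ω ^ 2) μ) (hX : ∀ i ∈ t, Integrable (fun ω => X i ω ^ 2) μ)
    (hZv : ∫ ω, Z ω ^ 2 ∂μ ≤ v) (hXv : ∀ i ∈ t, ∫ ω, X i ω ^ 2 ∂μ ≤ v) :
    ∫ ω, (Z ω - ∑ i ∈ t, p i * X i ω) ^ 2 ∂μ ≤ 4 * v := by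
  have hXsum : Integrable (fun ω => ∑ i ∈ t, p i * X i ω ^ 2) μ :=
    integrable_finsetSum _ fun i hi => (hX i hi).const_mul _
  have hpt : ∀ ω, (Z ω - ∑ i ∈ t, p i * X i ω) ^ 2
      ≤ 2 * Z ω ^ 2 + 2 * ∑ i ∈ t, p i * X i ω ^ 2 := fun ω => by
    have hjensen : (∑ i ∈ t, p i * X i ω) ^ 2 ≤ ∑ i ∈ t, p i * X i ω ^ 2 := by
      simpa using (Even.convexOn_pow even_two).map_sum_le hp₀ hp₁ fun i _ => Set.mem_univ (X i ω)
    nlinarith [sq_nonneg (Z ω + ∑ i ∈ t, p i * X i ω)]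
  calc ∫ ω, (Z ω - ∑ i ∈ t, p i * X i ω) ^ 2 ∂μ
      ≤ ∫ ω, (2 * Z ω ^ 2 + 2 * ∑ i ∈ t, p i * X i ω ^ 2) ∂μ :=
        integral_mono_of_nonneg (.of_forall fun _ => sq_nonneg _)
          ((hZ.const_mul 2).add (hXsum.const_mul 2)) (.of_forall hpt)
    _ = 2 * ∫ ω, Z ω ^ 2 ∂μ + 2 * ∑ i ∈ t, p i * ∫ ω, X i ω ^ 2 ∂μ := by
        rw [integral_add (hZ.const_mul 2) (hXsum.const_mul 2), integral_const_mul,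
          integral_const_mul, integral_finsetSum _ fun i hi => (hX i hi).const_mul _]
        simp only [integral_const_mul]
    _ ≤ 2 * v + 2 * ∑ i ∈ t, p i * v := by
        gcongr with i hi
        exacts [hp₀ i hi, hXv i hi]
    _ = 4 * v := by rw [← Finset.sum_mul, hp₁]; ring

section FiniteSums

variable {S : Type*} {w : S → ℝ} {A : Finset S}

lemma mul_exp_sum_div_mul_le_sum_mul_exp (hw : ∀ σ ∈ A, 0 ≤ w σ) (hA : 0 < ∑ σ ∈ A, w σ)
    (x : S → ℝ) :
    (∑ σ ∈ A, w σ) * exp (∑ σ ∈ A, w σ / (∑ σ ∈ A, w σ) * x σ)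
      ≤ ∑ σ ∈ A, w σ * exp (x σ) := by
  have hjensen := convexOn_exp.map_sum_le (t := A) (w := fun σ => w σ / ∑ σ ∈ A, w σ)
    (fun σ hσ => div_nonneg (hw σ hσ) hA.le)
    (by rw [← Finset.sum_div, div_self hA.ne']) fun σ _ => Set.mem_univ (x σ)
  simp only [smul_eq_mul] at hjensen
  calc (∑ σ ∈ A, w σ) * exp (∑ σ ∈ A, w σ / (∑ σ ∈ A, w σ) * x σ)
      ≤ (∑ σ ∈ A, w σ) * ∑ σ ∈ A, w σ / (∑ σ ∈ A, w σ) * exp (x σ) := by gcongr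
    _ = ∑ σ ∈ A, w σ * exp (x σ) := by
        rw [Finset.mul_sum]
        exact Finset.sum_congr rfl fun σ _ => by field_simp

lemma sum_mul_exp_pos (hw : ∀ σ ∈ A, 0 ≤ w σ) (hA : 0 < ∑ σ ∈ A, w σ) (x : S → ℝ) :
    0 < ∑ σ ∈ A, w σ * exp (x σ) :=
  (mul_pos hA (exp_pos _)).trans_le (mul_exp_sum_div_mul_le_sum_mul_exp hw hA x)

variable [Fintype S]

lemma log_sum_mul_exp_le_log_sum_mul_exp (hw : ∀ σ, 0 ≤ w σ) (hA : 0 < ∑ σ ∈ A, w σ)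
    (x : S → ℝ) : log (∑ σ ∈ A, w σ * exp (x σ)) ≤ log (∑ σ, w σ * exp (x σ)) :=
  log_le_log (sum_mul_exp_pos (fun σ _ => hw σ) hA x)
    (Finset.sum_le_sum_of_subset_of_nonneg (Finset.subset_univ A) fun σ _ _ => by
      have := hw σ; positivity)

variable [DecidableEq S]

lemma log_sum_sub_log_sum_le (hw : ∀ σ, 0 ≤ w σ) (hA : 0 < ∑ σ ∈ A, w σ) (x : S → ℝ) :
    log (∑ σ, w σ * exp (x σ)) - log (∑ σ ∈ A, w σ * exp (x σ))
      ≤ log (1 + ∑ τ ∈ Aᶜ, w τ / (∑ σ ∈ A, w σ)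
          * exp (x τ - ∑ σ ∈ A, w σ / (∑ σ ∈ A, w σ) * x σ)) := by
  set wA := ∑ σ ∈ A, w σ
  set y := ∑ σ ∈ A, w σ / wA * x σ
  have hjensen := mul_exp_sum_div_mul_le_sum_mul_exp (fun σ _ => hw σ) hA x
  have hZA := sum_mul_exp_pos (fun σ _ => hw σ) hA x
  have hZC : 0 ≤ ∑ τ ∈ Aᶜ, w τ * exp (x τ) := Finset.sum_nonneg fun τ _ => by
    have := hw τ; positivity
  rw [← Finset.sum_add_sum_compl A, ← log_div (add_pos_of_pos_of_nonneg hZA hZC).ne' hZA.ne',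
    add_div, div_self hZA.ne']
  refine log_le_log (by positivity) (add_le_add_right ?_ 1)
  calc (∑ τ ∈ Aᶜ, w τ * exp (x τ)) / ∑ σ ∈ A, w σ * exp (x σ)
      ≤ (∑ τ ∈ Aᶜ, w τ * exp (x τ)) / (wA * exp y) := by gcongr
    _ = ∑ τ ∈ Aᶜ, w τ / wA * exp (x τ - y) := by
        rw [Finset.sum_div]
        exact Finset.sum_congr rfl fun τ _ => by rw [exp_sub]; field_simp

end FiniteSums

lemma integral_le_log_of_le_log_of_integral_le {Ω : Type*} [MeasurableSpace Ω] {μ : Measure Ω}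
    [IsProbabilityMeasure μ] {f G : Ω → ℝ} {m : ℝ} (hf : ∀ ω, 0 ≤ f ω)
    (hfG : ∀ ω, f ω ≤ log (G ω)) (hG : ∀ ω, 0 < G ω) (hGint : Integrable G μ)
    (hm : 0 < m) (hGm : ∫ ω, G ω ∂μ ≤ m) :
    ∫ ω, f ω ∂μ ≤ log m := by
  -- Jensen for `log`, via its tangent line at `m`.
  have htangent : ∀ ω, f ω ≤ log m - 1 + G ω / m := fun ω => by
    have := log_le_sub_one_of_pos (div_pos (hG ω) hm)
    rw [log_div (hG ω).ne' hm.ne'] at this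
    linarith [hfG ω]
  calc ∫ ω, f ω ∂μ ≤ ∫ ω, (log m - 1 + G ω / m) ∂μ :=
        integral_mono_of_nonneg (.of_forall hf) ((integrable_const _).add (hGint.div_const m))
          (.of_forall htangent)
    _ = log m - 1 + (∫ ω, G ω ∂μ) / m := by
        rw [integral_add (integrable_const _) (hGint.div_const m), integral_const,
          integral_div, probReal_univ, one_smul]
    _ ≤ log m := by
        have : (∫ ω, G ω ∂μ) / m ≤ 1 := (div_le_one hm).2 hGm
        linarith

section GaussianFamily

variable {S Ω : Type*} [Fintype S] [MeasurableSpace Ω]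

def IsCenteredGaussianFamily (μ : Measure Ω) (X : S → Ω → ℝ) : Prop :=
  ∀ c : S → ℝ, ∃ u : ℝ≥0, μ.map (fun ω => ∑ σ, c σ * X σ ω) = gaussianReal 0 u

namespace IsCenteredGaussianFamily

variable {μ : Measure Ω} {X : S → Ω → ℝ}

lemma exists_map_sub_sum_eq (hX : IsCenteredGaussianFamily μ X) (τ : S) (A : Finset S)
    (p : S → ℝ) :
    ∃ u : ℝ≥0, μ.map (fun ω => X τ ω - ∑ σ ∈ A, p σ * X σ ω) = gaussianReal 0 u := by
  classical
  obtain ⟨u, hu⟩ := hX (Pi.single τ 1 - (A : Set S).indicator p)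
  refine ⟨u, Eq.trans ?_ hu⟩
  congr 1
  funext ω
  simp [Pi.single_apply, sub_mul, Finset.sum_sub_distrib, Set.indicator_apply, ite_mul,
    Finset.sum_ite_mem]

lemma integrable_sq (hX : IsCenteredGaussianFamily μ X) (σ : S) :
    Integrable (fun ω => X σ ω ^ 2) μ := by
  obtain ⟨u, hu⟩ := hX.exists_map_sub_sum_eq σ ∅ 0
  exact integrable_sq_of_map_eq_gaussianReal (by simpa using hu)

lemma integrable_exp_sub_sum (hX : IsCenteredGaussianFamily μ X) (τ : S) (A : Finset S)
    (p : S → ℝ) :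
    Integrable (fun ω => exp (X τ ω - ∑ σ ∈ A, p σ * X σ ω)) μ :=
  integrable_exp_of_map_eq_gaussianReal (hX.exists_map_sub_sum_eq τ A p).choose_spec

lemma integral_exp_sub_sum_le (hX : IsCenteredGaussianFamily μ X) {v : ℝ}
    (hv : ∀ σ, ∫ ω, X σ ω ^ 2 ∂μ ≤ v) {A : Finset S} {p : S → ℝ} (hp₀ : ∀ σ ∈ A, 0 ≤ p σ)
    (hp₁ : ∑ σ ∈ A, p σ = 1) (τ : S) :
    ∫ ω, exp (X τ ω - ∑ σ ∈ A, p σ * X σ ω) ∂μ ≤ exp (2 * v) := by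
  obtain ⟨u, hu⟩ := hX.exists_map_sub_sum_eq τ A p
  rw [integral_exp_of_map_eq_gaussianReal hu]
  have := integral_sq_sub_sum_le hp₀ hp₁ (hX.integrable_sq τ) (fun σ _ => hX.integrable_sq σ)
    (hv τ) (fun σ _ => hv σ)
  gcongr
  linarith

lemma integral_one_add_sum_mul_exp_sub_sum_le [IsProbabilityMeasure μ]
    (hX : IsCenteredGaussianFamily μ X) {v : ℝ}
    (hv : ∀ σ, ∫ ω, X σ ω ^ 2 ∂μ ≤ v) {A : Finset S} {p : S → ℝ} (hp₀ : ∀ σ ∈ A, 0 ≤ p σ)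
    (hp₁ : ∑ σ ∈ A, p σ = 1) {B : Finset S} {c : S → ℝ} (hc : ∀ τ ∈ B, 0 ≤ c τ) :
    ∫ ω, (1 + ∑ τ ∈ B, c τ * exp (X τ ω - ∑ σ ∈ A, p σ * X σ ω)) ∂μ
      ≤ 1 + exp (2 * v) * ∑ τ ∈ B, c τ := by
  have hint (τ : S) := (hX.integrable_exp_sub_sum τ A p).const_mul (c τ)
  rw [integral_add (integrable_const 1) (integrable_finsetSum _ fun τ _ => hint τ),
    integral_finsetSum _ fun τ _ => hint τ, Finset.mul_sum]
  simp only [integral_const_mul, integral_const, probReal_univ, one_smul]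
  gcongr 1 + ∑ τ ∈ B, ?_ with τ hτ
  rw [mul_comm (exp (2 * v))]
  exact mul_le_mul_of_nonneg_left (hX.integral_exp_sub_sum_le hv hp₀ hp₁ τ) (hc τ hτ)

end IsCenteredGaussianFamily

end GaussianFamily

theorem gaussian_free_energy_restriction_bound_general
    {S : Type*} [Fintype S] [DecidableEq S]
    {Ω : Type*} [MeasurableSpace Ω] (μ : Measure Ω) [IsProbabilityMeasure μ]
    (X : S → Ω → ℝ)
    (hGauss : ∀ c : S → ℝ, ∃ u : NNReal,
      Measure.map (fun ω => ∑ σ, c σ * X σ ω) μ = gaussianReal 0 u)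
    (v : ℝ)
    (hVar : ∀ σ, (∫ ω, (X σ ω) ^ 2 ∂μ) ≤ v)
    (w : S → ℝ) (hw : ∀ σ, 0 ≤ w σ)
    (A : Finset S) (hA : 0 < ∑ σ ∈ A, w σ) :
    (∫ ω, (Real.log (∑ σ, w σ * Real.exp (X σ ω))
        - Real.log (∑ σ ∈ A, w σ * Real.exp (X σ ω))) ∂μ)
      ≤ Real.log (1 + Real.exp (2 * v) * (∑ σ ∈ Aᶜ, w σ) / (∑ σ ∈ A, w σ)) := by
  set wA := ∑ σ ∈ A, w σ
  have hp (σ : S) : 0 ≤ w σ / wA := div_nonneg (hw σ) hA.le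
  set G : Ω → ℝ := fun ω =>
    1 + ∑ τ ∈ Aᶜ, w τ / wA * exp (X τ ω - ∑ σ ∈ A, w σ / wA * X σ ω)
  have hG (ω : Ω) : 0 < G ω :=
    add_pos_of_pos_of_nonneg one_pos (Finset.sum_nonneg fun τ _ => by have := hp τ; positivity)
  have hGint : Integrable G μ :=
    (integrable_const 1).add (integrable_finsetSum _ fun τ _ =>
      (IsCenteredGaussianFamily.integrable_exp_sub_sum hGauss τ A _).const_mul _)
  have hGm : ∫ ω, G ω ∂μ ≤ 1 + exp (2 * v) * (∑ σ ∈ Aᶜ, w σ) / wA := by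
    rw [mul_div_assoc, Finset.sum_div]
    exact IsCenteredGaussianFamily.integral_one_add_sum_mul_exp_sub_sum_le hGauss hVar
      (fun σ _ => hp σ) (by rw [← Finset.sum_div, div_self hA.ne']) fun τ _ => hp τ
  have hwC : 0 ≤ ∑ σ ∈ Aᶜ, w σ := Finset.sum_nonneg fun σ _ => hw σ
  exact integral_le_log_of_le_log_of_integral_le
    (fun ω => sub_nonneg.2 (log_sum_mul_exp_le_log_sum_mul_exp hw hA (X · ω)))
    (fun ω => log_sum_sub_log_sum_le hw hA (X · ω)) hG hGint (by positivity) hGm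

/-- Abstract restriction estimate for the free energy. Let `(X_σ)` be a
centered Gaussian process on a finite index set `S` (every linear combination of the
`X_σ` is a centered Gaussian) with `Var(X_σ) ≤ v`, let `w` be a probability weight on
`S` and `A ⊆ S` with `w(A) > 0`. Then
`E[log ∑_σ w(σ)e^{X_σ} - log ∑_{σ∈A} w(σ)e^{X_σ}] ≤ log(1 + e^{2v} w(Aᶜ)/w(A))`. -/
theorem gaussian_free_energy_restriction_bound
    {S : Type*} [Fintype S] [DecidableEq S]
    {Ω : Type*} [MeasurableSpace Ω] (μ : Measure Ω) [IsProbabilityMeasure μ]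
    (X : S → Ω → ℝ) (hmeas : ∀ σ, Measurable (X σ))
    (hGauss : ∀ c : S → ℝ, ∃ u : NNReal,
      Measure.map (fun ω => ∑ σ, c σ * X σ ω) μ = gaussianReal 0 u)
    (v : ℝ) (hv : 0 ≤ v)
    (hVar : ∀ σ, (∫ ω, (X σ ω) ^ 2 ∂μ) ≤ v)
    (w : S → ℝ) (hw : ∀ σ, 0 ≤ w σ) (hw1 : ∑ σ, w σ = 1)
    (A : Finset S) (hA : 0 < ∑ σ ∈ A, w σ) :
    (∫ ω, (Real.log (∑ σ, w σ * Real.exp (X σ ω))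
        - Real.log (∑ σ ∈ A, w σ * Real.exp (X σ ω))) ∂μ)
      ≤ Real.log (1 + Real.exp (2 * v) * (∑ σ ∈ Aᶜ, w σ) / (∑ σ ∈ A, w σ)) :=
  gaussian_free_energy_restriction_bound_general μ X hGauss v hVar w hw A hA
end
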